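/- arXiv:1510.04357 — 3 statements merged into one kernel-verified Lean document; each statement's English description precedes it below -/
import Mathlib

section
/- Let (Y,ℙ) be a probability space, and let B_0, B_1, ... be measurable events. Fix integers q < n and define A_r = B_r \ (B_{r+1} ∪ ... ∪ B_{r+q}). Let W(B) = ⋂_{i=0}^{n-1} B_i^c and W(A) = ⋂_{i=0}^{n-1} A_i^c. Then |ℙ(W(B)) - ℙ(W(A))| ≤ Σ_{j=1}^{q} ℙ(W(A) ∩ (B_{n-j} \ A_{n-j})). -/
open MeasureTheory Filter Topology

theorem stmt_0 {Y : Type*} [MeasurableSpace Y] (P : Measure Y) [IsProbabilityMeasure P]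
    (B A : ℕ → Set Y) (hB : ∀ i, MeasurableSet (B i)) (q n : ℕ) (hqn : q < n)
    (hA : ∀ r, A r = B r \ ⋃ j ∈ Finset.Icc 1 q, B (r + j)) :
    |(P (⋂ i ∈ Finset.range n, (B i)ᶜ)).toReal - (P (⋂ i ∈ Finset.range n, (A i)ᶜ)).toReal|
      ≤ ∑ j ∈ Finset.Icc 1 q,
        (P ((⋂ i ∈ Finset.range n, (A i)ᶜ) ∩ (B (n - j) \ A (n - j)))).toReal := by
  classical
  set WB := ⋂ i ∈ Finset.range n, (B i)ᶜ with hWBdef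
  set WA := ⋂ i ∈ Finset.range n, (A i)ᶜ with hWAdef
  have hWBm : MeasurableSet WB :=
    Finset.measurableSet_biInter _ fun i _ => (hB i).compl
  have hsub : WB ⊆ WA := by
    apply Set.iInter₂_mono
    intro i _
    apply Set.compl_subset_compl.mpr
    rw [hA]; exact Set.diff_subset
  have hcover : WA \ WB ⊆ ⋃ j ∈ Finset.Icc 1 q, (WA ∩ (B (n - j) \ A (n - j))) := by
    rintro y ⟨hyA, hyB⟩
    have hyA' : ∀ i < n, y ∉ A i := by
      intro i hi
      have := Set.mem_iInter₂.mp hyA i (Finset.mem_range.mpr hi)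
      exact this
    have hyB' : ∃ i < n, y ∈ B i := by
      by_contra h
      push_neg at h
      exact hyB (Set.mem_iInter₂.mpr fun i hi => h i (Finset.mem_range.mp hi))
    set S := (Finset.range n).filter (fun i => y ∈ B i) with hS
    have hSne : S.Nonempty := by
      obtain ⟨i, hi, hyi⟩ := hyB'
      exact ⟨i, Finset.mem_filter.mpr ⟨Finset.mem_range.mpr hi, hyi⟩⟩
    set r := S.max' hSne with hr
    have hrS : r ∈ S := S.max'_mem hSne
    have hrn : r < n := Finset.mem_range.mp (Finset.mem_filter.mp hrS).1
    have hyr : y ∈ B r := (Finset.mem_filter.mp hrS).2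
    have hynA : y ∉ A r := hyA' r hrn
    rw [hA] at hynA
    have hyU : y ∈ ⋃ j ∈ Finset.Icc 1 q, B (r + j) := by
      by_contra h
      exact hynA ⟨hyr, h⟩
    obtain ⟨j, hj, hyj⟩ := Set.mem_iUnion₂.mp hyU
    have hj' := Finset.mem_Icc.mp hj
    have hrjn : n ≤ r + j := by
      by_contra h
      push_neg at h
      have : r + j ∈ S := Finset.mem_filter.mpr ⟨Finset.mem_range.mpr h, hyj⟩
      have := S.le_max' _ this
      omega
    refine Set.mem_iUnion₂.mpr ⟨n - r, Finset.mem_Icc.mpr ⟨by omega, by omega⟩, hyA, ?_, ?_⟩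
    · have : n - (n - r) = r := by omega
      rw [this]; exact hyr
    · have : n - (n - r) = r := by omega
      rw [this]; exact hyA' r hrn
  have hfin : P WB ≠ ⊤ := measure_ne_top _ _
  have habs : |(P WB).toReal - (P WA).toReal| = (P WA).toReal - (P WB).toReal := by
    rw [abs_sub_comm, abs_of_nonneg]
    have := measure_mono hsub (μ := P)
    have h1 := ENNReal.toReal_mono (measure_ne_top P WA) this
    linarith
  rw [habs]
  have hdiff : (P WA).toReal - (P WB).toReal = (P (WA \ WB)).toReal := by
    rw [measure_diff hsub hWBm.nullMeasurableSet hfin,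
      ENNReal.toReal_sub_of_le (measure_mono hsub) (measure_ne_top P WA)]
  rw [hdiff]
  calc (P (WA \ WB)).toReal
      ≤ (P (⋃ j ∈ Finset.Icc 1 q, (WA ∩ (B (n - j) \ A (n - j))))).toReal := by
        exact ENNReal.toReal_mono (measure_ne_top _ _) (measure_mono hcover)
    _ ≤ (∑ j ∈ Finset.Icc 1 q, P (WA ∩ (B (n - j) \ A (n - j)))).toReal := by
        apply ENNReal.toReal_mono
        · exact (ENNReal.sum_lt_top.mpr fun j _ => measure_lt_top P _).ne
        · exact measure_biUnion_finset_le _ _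
    _ = ∑ j ∈ Finset.Icc 1 q, (P (WA ∩ (B (n - j) \ A (n - j)))).toReal := by
        rw [ENNReal.toReal_sum]
        intro j _
        exact measure_ne_top _ _
end

section
/- Let T_β(x) = βx mod 1 on [0,1] with β > 1 (with identification 0 ∼ 1), and suppose ζ ∈ [0,1] satisfies T_β^p(ζ) = ζ with p minimal and T_β^j(ζ) ≠ 0 for all j ≥ 0. Then for the sets U_n = B_{δ_n}(ζ) with δ_n → 0 and D_n = U_n ∩ T_β^{-p}(U_n^c), one has lim_{n→∞} m(D_n)/m(U_n) = 1 - β^{-p}, where m is Lebesgue measure. -/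
open MeasureTheory Filter Topology

/-- The β-transformation `x ↦ βx mod 1`. -/
noncomputable def betaMap (β : ℝ) (x : ℝ) : ℝ := Int.fract (β * x)

/-!
Since the orbit of `ζ` never hits the discontinuity, each iterate `T_β^j` is affine with slope
`β^j` on a neighbourhood of `ζ`. Hence for small `δ`, the map `T_β^p` acts on `B_δ(ζ)` as the
dilation by `β^p` centred at the fixed point `ζ`, so `D = B_δ(ζ) \ B_{δ/β^p}(ζ)`, whose measure is
exactly `(1 - β^{-p}) · m(B_δ(ζ))`.
-/

lemma Int.fract_add_of_mem_Ioo {a t : ℝ} (ht : t ∈ Set.Ioo (-Int.fract a) (1 - Int.fract a)) :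
    Int.fract (a + t) = Int.fract a + t := by
  obtain ⟨h₀, h₁⟩ := ht
  refine Int.fract_eq_iff.mpr ⟨by linarith, by linarith, ⌊a⌋, ?_⟩
  rw [← Int.self_sub_fract]
  ring

lemma betaMap_iterate_eventually_affine {β ζ : ℝ} (horb : ∀ j, (betaMap β)^[j] ζ ≠ 0) (j : ℕ) :
    ∀ᶠ x in 𝓝 ζ, (betaMap β)^[j] x = (betaMap β)^[j] ζ + β ^ j * (x - ζ) := by
  induction j with
  | zero => simp
  | succ j ih =>
    set a := β * (betaMap β)^[j] ζ
    have hfract : Int.fract a = (betaMap β)^[j + 1] ζ := by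
      rw [Function.iterate_succ_apply']; rfl
    have hfract_pos : 0 < Int.fract a :=
      (Int.fract_nonneg a).lt_of_ne (hfract ▸ horb (j + 1)).symm
    have hsmall :
        ∀ᶠ x in 𝓝 ζ, β ^ (j + 1) * (x - ζ) ∈ Set.Ioo (-Int.fract a) (1 - Int.fract a) := by
      have hlim : Tendsto (fun x => β ^ (j + 1) * (x - ζ)) (𝓝 ζ) (𝓝 0) := by
        simpa using ((continuous_sub_right ζ).const_mul (β ^ (j + 1))).tendsto ζ
      exact hlim.eventually
        (Ioo_mem_nhds (neg_lt_zero.mpr hfract_pos) (sub_pos.mpr (Int.fract_lt_one a)))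
    filter_upwards [ih, hsmall] with x hx hxsmall
    have hlin : β * ((betaMap β)^[j] ζ + β ^ j * (x - ζ)) = a + β ^ (j + 1) * (x - ζ) := by ring
    rw [← hfract, Function.iterate_succ_apply', hx, betaMap, hlin,
      Int.fract_add_of_mem_Ioo hxsmall]

lemma ball_inter_preimage_compl_ball {f : ℝ → ℝ} {ζ r c : ℝ} (hc : 0 < c)
    (hf : ∀ x ∈ Metric.ball ζ r, f x = ζ + c * (x - ζ)) :
    Metric.ball ζ r ∩ f ⁻¹' (Metric.ball ζ r)ᶜ = Metric.ball ζ r \ Metric.ball ζ (r / c) := by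
  ext x
  simp only [Set.mem_inter_iff, Set.mem_preimage, Set.mem_compl_iff, Set.mem_sdiff,
    and_congr_right_iff]
  intro hx
  rw [hf x hx, Metric.mem_ball, Metric.mem_ball, Real.dist_eq, Real.dist_eq, add_sub_cancel_left,
    abs_mul, abs_of_pos hc, lt_div_iff₀' hc]

lemma volume_ball_diff_ball_div_volume_ball {ζ r c : ℝ} (hr : 0 < r) (hc : 1 ≤ c) :
    (volume (Metric.ball ζ r \ Metric.ball ζ (r / c))).toReal / (volume (Metric.ball ζ r)).toReal
      = 1 - c⁻¹ := by
  have hc₀ : 0 < c := zero_lt_one.trans_le hc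
  have hrc : r / c ≤ r := div_le_self hr.le hc
  rw [measure_sdiff (Metric.ball_subset_ball hrc) measurableSet_ball.nullMeasurableSet
      measure_ball_lt_top.ne, Real.volume_ball, Real.volume_ball,
    ← ENNReal.ofReal_sub _ (by positivity), ENNReal.toReal_ofReal (by linarith),
    ENNReal.toReal_ofReal (by positivity)]
  field_simp

theorem stmt_9_general (β : ℝ) (hβ : 1 < β) (ζ : ℝ)
    (p : ℕ) (hper : (betaMap β)^[p] ζ = ζ)
    (horb : ∀ j, (betaMap β)^[j] ζ ≠ 0)
    (δ : ℕ → ℝ) (hδpos : ∀ n, 0 < δ n) (hδ : Tendsto δ atTop (nhds 0))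
    (U D : ℕ → Set ℝ)
    (hU : ∀ n, U n = Metric.ball ζ (δ n))
    (hD : ∀ n, D n = U n ∩ (fun x => (betaMap β)^[p] x) ⁻¹' (U n)ᶜ) :
    Tendsto (fun n => (volume (D n)).toReal / (volume (U n)).toReal) atTop
      (nhds (1 - (β ^ p)⁻¹)) := by
  have hβp : 1 ≤ β ^ p := one_le_pow₀ hβ.le
  obtain ⟨ε, hε, haffine⟩ :=
    Metric.eventually_nhds_iff_ball.mp (betaMap_iterate_eventually_affine horb p)
  refine tendsto_const_nhds.congr' ?_
  filter_upwards [hδ.eventually (ge_mem_nhds hε)] with n hn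
  have hdilation : ∀ x ∈ Metric.ball ζ (δ n), (betaMap β)^[p] x = ζ + β ^ p * (x - ζ) :=
    fun x hx => by rw [haffine x (Metric.ball_subset_ball hn hx), hper]
  rw [hD, hU, ball_inter_preimage_compl_ball (by positivity) hdilation,
    volume_ball_diff_ball_div_volume_ball (hδpos n) hβp]

theorem stmt_9 (β : ℝ) (hβ : 1 < β) (ζ : ℝ) (hζ : ζ ∈ Set.Icc (0:ℝ) 1)
    (p : ℕ) (hp : 0 < p) (hper : (betaMap β)^[p] ζ = ζ)
    (hmin : ∀ j, 0 < j → j < p → (betaMap β)^[j] ζ ≠ ζ)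
    (horb : ∀ j, (betaMap β)^[j] ζ ≠ 0)
    (δ : ℕ → ℝ) (hδpos : ∀ n, 0 < δ n) (hδ : Tendsto δ atTop (nhds 0))
    (U D : ℕ → Set ℝ)
    (hU : ∀ n, U n = Metric.ball ζ (δ n))
    (hD : ∀ n, D n = U n ∩ (fun x => (betaMap β)^[p] x) ⁻¹' (U n)ᶜ) :
    Tendsto (fun n => (volume (D n)).toReal / (volume (U n)).toReal) atTop
      (nhds (1 - (β ^ p)⁻¹)) :=
  stmt_9_general β hβ ζ p hper horb δ hδpos hδ U D hU hD
end

section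
/- Let λ ∈ (0,1), B > 0, C_0 > 0, C_2 > 0 and suppose p(i,j) ≤ C_0² u² + B C_2 λ^{j-i} u for all n^γ ≤ i < j ≤ n, where u = m(U_n) satisfies n·u → τ. If for each i the inner sum runs over j ≥ i + R_n with R_n → ∞, and each i contributes at most L_n = (n/k_n)(1+o(1)) terms with k_n → ∞, then Σ_{i=n^γ}^{n} Σ_{j≥i+R_n}^{i+L_n} p(i,j) → 0 as n → ∞. -/
/-!
Since `n * u n` is bounded by some `M`, every term is at most
`C₀² (M/n)² + B C₂ (M/n) λ^(j-i)`.
For fixed `i` there are at most `L n + 1` terms and the geometric tail is at most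
`λ^(R n) / (1 - λ)`; summing over at most `n + 1` values of `i` gives
`O((L n + 1) / n + λ^(R n))`, which tends to `0` because `L n / n ~ 1 / k n`.
The hypothesis at level `n` only covers `j ≤ n`, so it is used at level `max n j` instead;
for `j > n` this is legitimate because then `i > n - L n ≥ n / 2` lies far above `j ^ γ`.
-/

open Filter Topology Finset

lemma sum_Icc_add_pow_sub_le {lam : ℝ} (hlam0 : 0 ≤ lam) (hlam1 : lam < 1) (i r l : ℕ) :
    ∑ j ∈ Icc (i + r) (i + l), lam ^ (j - i) ≤ lam ^ r / (1 - lam) := by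
  rw [← map_add_left_Icc, sum_map]
  simp only [addLeftEmbedding_apply, Nat.add_sub_cancel_left]
  rw [← Ico_add_one_right_eq_Icc]
  exact geom_sum_Ico_le_of_lt_one hlam0 hlam1

lemma sum_Icc_add_le_of_le_add_pow {f : ℕ → ℝ} {lam A c : ℝ} (hlam0 : 0 ≤ lam)
    (hlam1 : lam < 1) (hA : 0 ≤ A) (hc : 0 ≤ c) {i r l : ℕ}
    (hf : ∀ j ∈ Icc (i + r) (i + l), f j ≤ A + c * lam ^ (j - i)) :
    ∑ j ∈ Icc (i + r) (i + l), f j ≤ (l + 1) * A + c * (lam ^ r / (1 - lam)) := by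
  have hcard : ((#(Icc (i + r) (i + l)) : ℕ) : ℝ) ≤ l + 1 := by
    rw [Nat.card_Icc]
    exact_mod_cast (by omega : i + l + 1 - (i + r) ≤ l + 1)
  calc ∑ j ∈ Icc (i + r) (i + l), f j
      ≤ ∑ j ∈ Icc (i + r) (i + l), (A + c * lam ^ (j - i)) := sum_le_sum hf
    _ = #(Icc (i + r) (i + l)) * A + c * ∑ j ∈ Icc (i + r) (i + l), lam ^ (j - i) := by
      rw [sum_add_distrib, sum_const, nsmul_eq_mul, mul_sum]
    _ ≤ (l + 1) * A + c * (lam ^ r / (1 - lam)) := by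
      gcongr
      exact sum_Icc_add_pow_sub_le hlam0 hlam1 i r l

lemma rpow_le_two_mul_rpow {γ x y : ℝ} (hγ0 : 0 ≤ γ) (hγ1 : γ ≤ 1) (hx : 0 ≤ x)
    (hxy : x ≤ 2 * y) : x ^ γ ≤ 2 * y ^ γ := by
  have hy : 0 ≤ y := by linarith
  calc x ^ γ ≤ (2 * y) ^ γ := Real.rpow_le_rpow hx hxy hγ0
    _ = 2 ^ γ * y ^ γ := Real.mul_rpow zero_le_two hy
    _ ≤ 2 ^ (1 : ℝ) * y ^ γ := by
      gcongr
      exact one_le_two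
    _ = 2 * y ^ γ := by rw [Real.rpow_one]

lemma natCast_max_rpow_le {γ : ℝ} (hγ0 : 0 ≤ γ) (hγ1 : γ ≤ 1) {n i j l : ℕ}
    (hi : (n : ℝ) ^ γ ≤ i) (hin : i ≤ n) (hjl : j ≤ i + l) (hl : 2 * l ≤ n)
    (hγn : 4 * (n : ℝ) ^ γ ≤ n) : ((max n j : ℕ) : ℝ) ^ γ ≤ i := by
  rcases le_total j n with hjn | hnj
  · rwa [max_eq_left hjn]
  · rw [max_eq_right hnj]
    have hjl' : (j : ℝ) ≤ i + l := by exact_mod_cast hjl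
    have hnj' : (n : ℝ) ≤ j := by exact_mod_cast hnj
    have hl' : 2 * (l : ℝ) ≤ n := by exact_mod_cast hl
    have hin' : (i : ℝ) ≤ n := by exact_mod_cast hin
    have := rpow_le_two_mul_rpow hγ0 hγ1 (Nat.cast_nonneg j) (by linarith : (j : ℝ) ≤ 2 * n)
    linarith

lemma eventually_four_mul_rpow_le {γ : ℝ} (hγ1 : γ < 1) :
    ∀ᶠ n : ℕ in atTop, 4 * (n : ℝ) ^ γ ≤ n := by
  have h : Tendsto (fun n : ℕ => (n : ℝ) ^ (-(1 - γ))) atTop (𝓝 0) :=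
    (tendsto_rpow_neg_atTop (by linarith)).comp tendsto_natCast_atTop_atTop
  filter_upwards [h.eventually_le_const (by norm_num : (0 : ℝ) < 1 / 4),
    eventually_gt_atTop 0] with n hsmall hn
  have hn' : (0 : ℝ) < n := by exact_mod_cast hn
  have hsplit : (n : ℝ) ^ γ = (n : ℝ) ^ (-(1 - γ)) * n := by
    rw [← Real.rpow_add_one hn'.ne']
    ring_nf
  rw [hsplit]
  nlinarith

lemma le_of_bound_at_max_level {p : ℕ → ℕ → ℝ} {u : ℕ → ℝ} {a b lam γ M : ℝ}
    (ha : 0 ≤ a) (hb : 0 ≤ b) (hlam0 : 0 ≤ lam) (hγ0 : 0 ≤ γ) (hγ1 : γ ≤ 1)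
    (hu0 : ∀ m, 0 ≤ u m)
    (hbound : ∀ m i j : ℕ, (m : ℝ) ^ γ ≤ i → i < j → j ≤ m →
      p i j ≤ a * u m ^ 2 + b * lam ^ (j - i) * u m)
    {n r l : ℕ} (hMu : ∀ m ≥ n, (m : ℝ) * u m ≤ M) (hn : 0 < n) (hr : 1 ≤ r)
    (hl : 2 * l ≤ n) (hγn : 4 * (n : ℝ) ^ γ ≤ n) {i j : ℕ} (hi : i ∈ Icc ⌈(n : ℝ) ^ γ⌉₊ n)
    (hj : j ∈ Icc (i + r) (i + l)) :
    p i j ≤ a * (M / n) ^ 2 + b * (M / n) * lam ^ (j - i) := by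
  rw [mem_Icc] at hi hj
  set m := max n j
  have hnm : n ≤ m := le_max_left n j
  have hn' : (0 : ℝ) < n := by exact_mod_cast hn
  have hum : u m ≤ M / n := by
    rw [le_div_iff₀ hn', mul_comm]
    calc (n : ℝ) * u m ≤ m * u m := by gcongr; exact hu0 m
      _ ≤ M := hMu m hnm
  have hγm := natCast_max_rpow_le hγ0 hγ1 (Nat.ceil_le.mp hi.1) hi.2 hj.2 hl hγn
  calc p i j ≤ a * u m ^ 2 + b * lam ^ (j - i) * u m :=
        hbound m i j hγm (by omega) (le_max_right n j)
    _ ≤ a * (M / n) ^ 2 + b * lam ^ (j - i) * (M / n) := by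
        have := hu0 m
        gcongr
    _ = a * (M / n) ^ 2 + b * (M / n) * lam ^ (j - i) := by ring

lemma tendsto_div_of_tendsto_mul_div {L k : ℕ → ℕ} (hk : Tendsto k atTop atTop)
    (hL : Tendsto (fun n : ℕ => (L n : ℝ) * (k n : ℝ) / (n : ℝ)) atTop (𝓝 1)) :
    Tendsto (fun n : ℕ => (L n : ℝ) / n) atTop (𝓝 0) := by
  refine (hL.div_atTop (tendsto_natCast_atTop_atTop.comp hk)).congr' ?_
  filter_upwards [hk.eventually_gt_atTop 0] with n hkn
  have : (k n : ℝ) ≠ 0 := by positivity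
  simp only [Function.comp_apply]
  field_simp

lemma tendsto_majorant {L R : ℕ → ℕ} {a b lam M : ℝ} (hlam0 : 0 ≤ lam) (hlam1 : lam < 1)
    (hL : Tendsto (fun n : ℕ => (L n : ℝ) / n) atTop (𝓝 0)) (hR : Tendsto R atTop atTop) :
    Tendsto (fun n : ℕ => ((n : ℝ) + 1) *
      ((L n + 1) * (a * (M / n) ^ 2) + b * (M / n) * (lam ^ R n / (1 - lam)))) atTop (𝓝 0) := by
  have hinv : Tendsto (fun n : ℕ => 1 / (n : ℝ)) atTop (𝓝 0) :=
    tendsto_one_div_atTop_nhds_zero_nat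
  have hn : Tendsto (fun n : ℕ => ((n : ℝ) + 1) / n) atTop (𝓝 1) := by
    have h : Tendsto (fun n : ℕ => 1 + 1 / (n : ℝ)) atTop (𝓝 1) := by
      simpa using (tendsto_const_nhds (x := (1 : ℝ))).add hinv
    refine h.congr' ?_
    filter_upwards [eventually_gt_atTop 0] with n hn
    field_simp
  have hL1 : Tendsto (fun n : ℕ => ((L n : ℝ) + 1) / n) atTop (𝓝 0) := by
    simpa [add_div] using hL.add hinv
  have hlamR : Tendsto (fun n => lam ^ R n) atTop (𝓝 0) :=
    (tendsto_pow_atTop_nhds_zero_of_lt_one hlam0 hlam1).comp hR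
  have := hn.mul ((hL1.const_mul (a * M ^ 2)).add (hlamR.const_mul (b * M / (1 - lam))))
  simp only [mul_zero, add_zero] at this
  refine this.congr fun n => ?_
  ring

theorem stmt_10_general (lam B C₀ C₂ τ γ : ℝ) (hlam0 : 0 < lam) (hlam1 : lam < 1)
    (hB : 0 < B) (hC₂ : 0 < C₂) (hγ0 : 0 < γ) (hγ1 : γ < 1)
    (p : ℕ → ℕ → ℝ) (hp0 : ∀ i j, 0 ≤ p i j)
    (u : ℕ → ℝ) (hu0 : ∀ n, 0 ≤ u n)
    (hu : Tendsto (fun n : ℕ => (n : ℝ) * u n) atTop (nhds τ))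
    (hbound : ∀ n : ℕ, ∀ i j : ℕ, ((n : ℝ) ^ γ ≤ i) → i < j → j ≤ n →
      p i j ≤ C₀ ^ 2 * u n ^ 2 + B * C₂ * lam ^ (j - i) * u n)
    (R : ℕ → ℕ) (hR : Tendsto R atTop atTop)
    (k : ℕ → ℕ) (hk : Tendsto k atTop atTop)
    (L : ℕ → ℕ)
    (hL : Tendsto (fun n : ℕ => (L n : ℝ) * (k n : ℝ) / (n : ℝ)) atTop (nhds 1)) :
    Tendsto (fun n : ℕ =>
        ∑ i ∈ Finset.Icc (⌈(n : ℝ) ^ γ⌉₊) n,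
          ∑ j ∈ Finset.Icc (i + R n) (i + L n), p i j)
      atTop (nhds 0) := by
  obtain ⟨M, hM, hMu⟩ : ∃ M, 0 < M ∧ ∀ᶠ n : ℕ in atTop, (n : ℝ) * u n ≤ M :=
    ⟨|τ| + 1, by positivity, hu.eventually_le_const ((le_abs_self τ).trans_lt (lt_add_one _))⟩
  obtain ⟨N, hN⟩ := eventually_atTop.mp hMu
  have hLn := tendsto_div_of_tendsto_mul_div hk hL
  refine squeeze_zero' (.of_forall fun n => sum_nonneg fun i _ => sum_nonneg fun j _ => hp0 i j)
    ?_ (tendsto_majorant (a := C₀ ^ 2) (b := B * C₂) (M := M) hlam0.le hlam1 hLn hR)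
  filter_upwards [eventually_ge_atTop N, eventually_gt_atTop 0, hR.eventually_ge_atTop 1,
    hLn.eventually_le_const one_half_pos, eventually_four_mul_rpow_le hγ1]
    with n hnN hn hRn hLn2 hγn
  have hl : 2 * L n ≤ n := by
    have hn' : (0 : ℝ) < n := by exact_mod_cast hn
    rw [div_le_iff₀ hn'] at hLn2
    exact_mod_cast (by linarith : 2 * (L n : ℝ) ≤ n)
  have hrow : ∀ i ∈ Icc ⌈(n : ℝ) ^ γ⌉₊ n, ∑ j ∈ Icc (i + R n) (i + L n), p i j ≤
      (L n + 1) * (C₀ ^ 2 * (M / n) ^ 2) + B * C₂ * (M / n) * (lam ^ R n / (1 - lam)) :=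
    fun i hi => sum_Icc_add_le_of_le_add_pow hlam0.le hlam1 (by positivity) (by positivity)
      fun j hj => le_of_bound_at_max_level (sq_nonneg C₀) (by positivity) hlam0.le hγ0.le hγ1.le
        hu0 hbound (fun m hm => hN m (hnN.trans hm)) hn hRn hl hγn hi hj
  refine (sum_le_card_nsmul _ _ _ hrow).trans ?_
  rw [nsmul_eq_mul, Nat.card_Icc]
  have : 0 ≤ lam ^ R n / (1 - lam) := div_nonneg (by positivity) (by linarith)
  gcongr
  exact_mod_cast Nat.sub_le _ _

theorem stmt_10 (lam B C₀ C₂ τ γ : ℝ) (hlam0 : 0 < lam) (hlam1 : lam < 1)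
    (hB : 0 < B) (hC₀ : 0 < C₀) (hC₂ : 0 < C₂) (hγ0 : 0 < γ) (hγ1 : γ < 1)
    (p : ℕ → ℕ → ℝ) (hp0 : ∀ i j, 0 ≤ p i j)
    (u : ℕ → ℝ) (hu0 : ∀ n, 0 ≤ u n)
    (hu : Tendsto (fun n : ℕ => (n : ℝ) * u n) atTop (nhds τ))
    (hbound : ∀ n : ℕ, ∀ i j : ℕ, ((n : ℝ) ^ γ ≤ i) → i < j → j ≤ n →
      p i j ≤ C₀ ^ 2 * u n ^ 2 + B * C₂ * lam ^ (j - i) * u n)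
    (R : ℕ → ℕ) (hR : Tendsto R atTop atTop)
    (k : ℕ → ℕ) (hk : Tendsto k atTop atTop)
    (L : ℕ → ℕ)
    (hL : Tendsto (fun n : ℕ => (L n : ℝ) * (k n : ℝ) / (n : ℝ)) atTop (nhds 1)) :
    Tendsto (fun n : ℕ =>
        ∑ i ∈ Finset.Icc (⌈(n : ℝ) ^ γ⌉₊) n,
          ∑ j ∈ Finset.Icc (i + R n) (i + L n), p i j)
      atTop (nhds 0) :=
  stmt_10_general lam B C₀ C₂ τ γ hlam0 hlam1 hB hC₂ hγ0 hγ1 p hp0 u hu0 hu hbound R hR k hk L hL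
end
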